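/- arXiv:1802.07902 — 2 statements merged into one kernel-verified Lean document; each statement's English description precedes it below -/
import Mathlib

section
/- Let q>1. The function b : ℝ × ℝ^d → ℝ ∪ {+∞} defined by b(m,w) = |w|^q/(q m^{q-1}) if m>0, b(0,0)=0, and b(m,w)=+∞ otherwise, is lower semicontinuous. -/
/-!
`b` is the perspective `m · φ(w/m)` of `φ(w) = ‖w‖^q/q`. It is continuous as an extended-real
function everywhere except at the origin: on `{m > 0}` it is a continuous real expression, on
`{m < 0}` it is identically `⊤`, and near `(0, w)` with `w ≠ 0` it equals `⊤` or
`(‖w'‖^q/q) · m^(1-q) → ⊤` (here `q > 1` is used). At the origin it attains its minimum `0`.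
-/

open Filter Topology

section

variable {E : Type*} [NormedAddCommGroup E]

open Classical in
noncomputable def powPerspective (q : ℝ) (p : ℝ × E) : EReal :=
  if 0 < p.1 then ((‖p.2‖ ^ q / (q * p.1 ^ (q - 1)) : ℝ) : EReal)
  else if p = 0 then 0 else ⊤

variable {q : ℝ} {p : ℝ × E}

theorem powPerspective_of_pos (hp : 0 < p.1) :
    powPerspective q p = ((‖p.2‖ ^ q / (q * p.1 ^ (q - 1)) : ℝ) : EReal) :=
  if_pos hp

@[simp]
theorem powPerspective_zero : powPerspective q (0 : ℝ × E) = 0 := by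
  simp [powPerspective]

theorem powPerspective_of_nonpos (hp : p.1 ≤ 0) (hp0 : p ≠ 0) : powPerspective q p = ⊤ := by
  simp [powPerspective, not_lt.2 hp, hp0]

theorem powPerspective_nonneg (hq : 0 ≤ q) (p : ℝ × E) : 0 ≤ powPerspective q p := by
  rcases lt_or_ge 0 p.1 with hp | hp
  · rw [powPerspective_of_pos hp]
    exact EReal.coe_nonneg.2 (by positivity)
  · by_cases hp0 : p = 0
    · simp [hp0]
    · simp [powPerspective_of_nonpos hp hp0]

theorem continuousAt_powPerspective_of_pos (hq : 0 < q) (hp : 0 < p.1) :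
    ContinuousAt (powPerspective q) p := by
  have hexpr : ContinuousAt
      (fun p : ℝ × E ↦ ((‖p.2‖ ^ q / (q * p.1 ^ (q - 1)) : ℝ) : EReal)) p := by
    refine continuous_coe_real_ereal.continuousAt.comp (ContinuousAt.div ?_ ?_ ?_)
    · exact (continuous_snd.norm.rpow_const fun _ ↦ Or.inr hq.le).continuousAt
    · exact continuousAt_const.mul (continuousAt_fst.rpow_const (Or.inl hp.ne'))
    · positivity
  refine hexpr.congr ?_
  filter_upwards [continuous_fst.isOpen_preimage _ isOpen_Ioi |>.mem_nhds hp] with p' hp'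
  exact (powPerspective_of_pos hp').symm

theorem continuousAt_powPerspective_of_neg (hp : p.1 < 0) :
    ContinuousAt (powPerspective q) p := by
  refine (continuousAt_const : ContinuousAt (fun _ ↦ (⊤ : EReal)) p).congr ?_
  filter_upwards [continuous_fst.isOpen_preimage _ isOpen_Iio |>.mem_nhds hp] with p' hp'
  exact (powPerspective_of_nonpos hp'.le (by rintro rfl; simp at hp')).symm

theorem tendsto_powPerspective_top (hq : 1 < q) {w : E} (hw : w ≠ 0) :
    Tendsto (powPerspective q) (𝓝 (0, w)) (𝓝 ⊤) := by
  refine Tendsto.if ?_ ?_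
  · rw [EReal.tendsto_coe_nhds_top_iff]
    have hnorm : Tendsto (fun p : ℝ × E ↦ ‖p.2‖ ^ q / q) (𝓝[{p | 0 < p.1}] (0, w))
        (𝓝 (‖w‖ ^ q / q)) :=
      (((continuous_snd.norm.rpow_const fun _ ↦ Or.inr (by linarith)).div_const q).tendsto
        (0, w)).mono_left nhdsWithin_le_nhds
    have hfst : Tendsto Prod.fst (𝓝[{p : ℝ × E | 0 < p.1}] (0, w)) (𝓝[>] 0) :=
      continuous_fst.continuousWithinAt.tendsto_nhdsWithin fun _ h ↦ h
    refine (hnorm.pos_mul_atTop (by positivity)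
      ((tendsto_rpow_neg_nhdsGT_zero (y := 1 - q) (by linarith)).comp hfst)).congr' ?_
    filter_upwards [self_mem_nhdsWithin] with p (hp : 0 < p.1)
    simp only [Function.comp_apply]
    rw [show 1 - q = -(q - 1) by ring, Real.rpow_neg hp.le]
    field_simp
  · refine tendsto_const_nhds.congr' ?_
    have hne : ((0 : ℝ), w) ≠ 0 := by simpa using hw
    filter_upwards [eventually_nhdsWithin_of_eventually_nhds (eventually_ne_nhds hne)] with p hp0
    exact (if_neg hp0).symm

theorem continuousAt_powPerspective (hq : 1 < q) (hp : p ≠ 0) :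
    ContinuousAt (powPerspective q) p := by
  obtain ⟨m, w⟩ := p
  rcases lt_trichotomy m 0 with hm | rfl | hm
  · exact continuousAt_powPerspective_of_neg hm
  · rw [ContinuousAt, powPerspective_of_nonpos le_rfl hp]
    exact tendsto_powPerspective_top hq (by simpa using hp)
  · exact continuousAt_powPerspective_of_pos (by linarith) hm

theorem lowerSemicontinuous_powPerspective (hq : 1 < q) :
    LowerSemicontinuous (powPerspective (E := E) q) := by
  intro p
  by_cases hp : p = 0
  · subst hp
    intro y hy
    rw [powPerspective_zero] at hy
    exact Eventually.of_forall fun p ↦ hy.trans_le (powPerspective_nonneg (by linarith) p)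
  · exact (continuousAt_powPerspective hq hp).lowerSemicontinuousAt

end

/-- The function `b(m,w) = ‖w‖^q/(q m^{q-1})` for `m>0`, `b(0,0)=0`, `+∞` otherwise,
is lower semicontinuous on `ℝ × ℝ^d`. -/
theorem stmt_2 (d : ℕ) (q : ℝ) (hq : 1 < q)
    (b : ℝ × EuclideanSpace ℝ (Fin d) → EReal)
    (hb_pos : ∀ (m : ℝ) (w : EuclideanSpace ℝ (Fin d)), 0 < m →
      b (m, w) = ((‖w‖ ^ q / (q * m ^ (q - 1)) : ℝ) : EReal))
    (hb_zero : b (0, 0) = 0)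
    (hb_top : ∀ (m : ℝ) (w : EuclideanSpace ℝ (Fin d)), ¬ 0 < m → ¬ (m = 0 ∧ w = 0) →
      b (m, w) = ⊤) :
    LowerSemicontinuous b := by
  have hb : b = powPerspective q := by
    funext ⟨m, w⟩
    by_cases hm : 0 < m
    · rw [hb_pos m w hm, powPerspective_of_pos hm]
    by_cases h0 : m = 0 ∧ w = 0
    · obtain ⟨rfl, rfl⟩ := h0
      rw [hb_zero]
      exact powPerspective_zero.symm
    · rw [hb_top m w hm h0, powPerspective_of_nonpos (not_lt.1 hm) (by simpa using h0)]
  exact hb ▸ lowerSemicontinuous_powPerspective hq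
end

section
/- Let q > 1, m > 0, u ∈ ℝ⁴, and K = ℝ₊ × ℝ₋ × ℝ₊ × ℝ₋. The vector w = m |P_K(-u)|^{(2-q)/(q-1)} P_K(-u) (with the convention that this is 0 when P_K(-u)=0) satisfies the inclusion -u ∈ |w|^{q-2} w / m^{q-1} + N_K(w), where N_K(w) is the normal cone to K at w. -/
open InnerProductSpace

/-! The map `x ↦ m ‖x‖^((2-q)/(q-1)) x` inverts `w ↦ ‖w‖^(q-2) w / m^(q-1)`, so with
`P = P_K(-u)` and `w = c P` (`c ≥ 0`) the inclusion reduces to `-u - P ∈ N_K(c P)`. Since `K` is a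
product of half-lines this splits into one inequality per coordinate: there either `P_i = 0` and
`-u_i` has the sign opposite to `K`'s, or `-u_i - P_i = 0`. -/

lemma mul_rpow_div_sub_one_rpow_sub_one {q m t : ℝ} (hq : 1 < q) (hm : 0 < m) (ht : 0 < t) :
    (m * t ^ ((2 - q) / (q - 1))) ^ (q - 1) = m ^ (q - 1) * t ^ (2 - q) := by
  rw [Real.mul_rpow hm.le (by positivity), ← Real.rpow_mul ht.le,
    div_mul_cancel₀ _ (sub_ne_zero.mpr hq.ne')]

lemma norm_rpow_div_smul_eq_of_eq_smul {E : Type*} [NormedAddCommGroup E] [NormedSpace ℝ E]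
    {q m : ℝ} (hq : 1 < q) (hm : 0 < m) {x w : E}
    (hw : w = (m * ‖x‖ ^ ((2 - q) / (q - 1))) • x) :
    (‖w‖ ^ (q - 2) / m ^ (q - 1)) • w = x := by
  rcases eq_or_ne x 0 with rfl | hx
  · simp [hw]
  have ht : 0 < ‖x‖ := norm_pos_iff.mpr hx
  set c := m * ‖x‖ ^ ((2 - q) / (q - 1))
  have hc : 0 < c := by positivity
  have hcw : ‖w‖ ^ (q - 2) / m ^ (q - 1) * c = 1 := by
    rw [hw, norm_smul, Real.norm_of_nonneg hc.le, div_mul_eq_mul_div,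
      Real.mul_rpow hc.le ht.le, mul_right_comm, ← Real.rpow_add_one hc.ne',
      show q - 2 + 1 = q - 1 by ring, mul_rpow_div_sub_one_rpow_sub_one hq hm ht, mul_assoc,
      ← Real.rpow_add ht, show 2 - q + (q - 2) = 0 by ring, Real.rpow_zero, mul_one,
      div_self (by positivity)]
  rw [hw, smul_smul, ← hw, hcw, one_smul]

lemma sub_max_zero_mul_sub_mul_max_zero_nonpos {a y : ℝ} (c : ℝ) (hy : 0 ≤ y) :
    (a - max a 0) * (y - c * max a 0) ≤ 0 := by
  rcases le_total 0 a with h | h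
  · simp [max_eq_left h]
  · simpa [max_eq_right h] using mul_nonpos_of_nonpos_of_nonneg h hy

lemma sub_min_zero_mul_sub_mul_min_zero_nonpos {a y : ℝ} (c : ℝ) (hy : y ≤ 0) :
    (a - min a 0) * (y - c * min a 0) ≤ 0 := by
  rcases le_total a 0 with h | h
  · simp [min_eq_left h]
  · simpa [min_eq_right h] using mul_nonpos_of_nonneg_of_nonpos h hy

/-- With `w = m |P_K(-u)|^{(2-q)/(q-1)} P_K(-u)`, the inclusion
`-u ∈ |w|^{q-2} w / m^{q-1} + N_K(w)` holds, where `N_K(w)` is the normal cone of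
`K = ℝ₊ × ℝ₋ × ℝ₊ × ℝ₋` at `w`. -/
theorem stmt_18 (q m : ℝ) (hq : 1 < q) (hm : 0 < m)
    (K : Set (EuclideanSpace ℝ (Fin 4)))
    (hK : K = {v : EuclideanSpace ℝ (Fin 4) | 0 ≤ v 0 ∧ v 1 ≤ 0 ∧ 0 ≤ v 2 ∧ v 3 ≤ 0})
    (u Pu : EuclideanSpace ℝ (Fin 4))
    (hPu0 : Pu 0 = max (-u 0) 0) (hPu1 : Pu 1 = min (-u 1) 0)
    (hPu2 : Pu 2 = max (-u 2) 0) (hPu3 : Pu 3 = min (-u 3) 0)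
    (w : EuclideanSpace ℝ (Fin 4))
    (hw : w = (m * ‖Pu‖ ^ ((2 - q) / (q - 1))) • Pu) :
    w ∈ K ∧ ∀ y ∈ K, ⟪(-u) - ((‖w‖ ^ (q - 2) / m ^ (q - 1)) • w), y - w⟫_ℝ ≤ 0 := by
  set c := m * ‖Pu‖ ^ ((2 - q) / (q - 1))
  have hc : 0 ≤ c := by positivity
  have hwi (i : Fin 4) : w i = c * Pu i := by rw [hw]; rfl
  subst hK
  refine ⟨?_, fun y ⟨hy0, hy1, hy2, hy3⟩ => ?_⟩
  · simp only [Set.mem_ofPred_eq, hwi, hPu0, hPu1, hPu2, hPu3]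
    exact ⟨by positivity, mul_nonpos_of_nonneg_of_nonpos hc (min_le_right _ _), by positivity,
      mul_nonpos_of_nonneg_of_nonpos hc (min_le_right _ _)⟩
  rw [norm_rpow_div_smul_eq_of_eq_smul hq hm hw, EuclideanSpace.inner_eq_star_dotProduct]
  simp only [dotProduct, Fin.sum_univ_four, star_trivial, PiLp.sub_apply, PiLp.neg_apply, hwi,
    hPu0, hPu1, hPu2, hPu3]
  have h0 := sub_max_zero_mul_sub_mul_max_zero_nonpos (a := -u 0) c hy0
  have h1 := sub_min_zero_mul_sub_mul_min_zero_nonpos (a := -u 1) c hy1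
  have h2 := sub_max_zero_mul_sub_mul_max_zero_nonpos (a := -u 2) c hy2
  have h3 := sub_min_zero_mul_sub_mul_min_zero_nonpos (a := -u 3) c hy3
  linarith
end
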